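/- arXiv:2402.16770 — 3 statements merged into one kernel-verified Lean document; each statement's English description precedes it below -/
import Mathlib

section
/- Let C be a positive semidefinite block matrix with blocks Ψ ∈ ℝ^{n×n}, Ω ∈ ℝ^{d×d}, and off-diagonal block Φ ∈ ℝ^{n×d}. Then Tr(Φ^⊤Φ)² ≤ Tr(Φ^⊤ΨΦ) · Tr(Ω). -/
open Matrix

lemma psd_trace_nonneg {m : Type*} [Fintype m] [DecidableEq m]
    {M : Matrix m m ℝ} (hM : M.PosSemidef) : 0 ≤ M.trace := by
  rw [Matrix.trace]
  apply Finset.sum_nonneg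
  intro i _
  simpa [Matrix.diag] using hM.diag_nonneg (i := i)

theorem trace_cauchy_schwarz_block
    {n d : ℕ} (Ψ : Matrix (Fin n) (Fin n) ℝ) (Ω : Matrix (Fin d) (Fin d) ℝ)
    (Φ : Matrix (Fin n) (Fin d) ℝ)
    (hC : (Matrix.fromBlocks Ψ Φ Φᵀ Ω).PosSemidef) :
    (Matrix.trace (Φᵀ * Φ)) ^ 2 ≤ Matrix.trace (Φᵀ * Ψ * Φ) * Matrix.trace Ω := by
  set a := Matrix.trace (Φᵀ * Ψ * Φ)
  set b := Matrix.trace (Φᵀ * Φ)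
  set c := Matrix.trace Ω
  have key : ∀ t : ℝ, 0 ≤ a * t ^ 2 + (2 * b) * t + c := by
    intro t
    set B : Matrix (Fin n ⊕ Fin d) (Fin d) ℝ := Matrix.fromRows (t • Φ) 1
    have hpsd := hC.conjTranspose_mul_mul_same B
    have htr := psd_trace_nonneg hpsd
    have hB : Bᴴ = Matrix.fromCols (t • Φᵀ) 1 := by
      rw [Matrix.conjTranspose_fromRows_eq_fromCols_conjTranspose,
        Matrix.conjTranspose_smul, Matrix.conjTranspose_one]
      ext i j
      simp [Matrix.conjTranspose_apply, Matrix.fromCols]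
    rw [hB, Matrix.mul_assoc, show B = Matrix.fromRows (t • Φ) 1 from rfl,
      Matrix.fromBlocks_mul_fromRows, Matrix.fromCols_mul_fromRows] at htr
    simp only [Matrix.mul_one, Matrix.one_mul, Matrix.mul_add, Matrix.smul_mul,
      Matrix.mul_smul, smul_smul, ← Matrix.mul_assoc, Matrix.trace_add,
      Matrix.trace_smul, smul_eq_mul] at htr
    nlinarith [htr]
  have hd := discrim_le_zero (a := a) (b := 2 * b) (c := c) (fun x => by nlinarith [key x])
  rw [discrim] at hd
  nlinarith [hd]
end

section
/- For all real m, c and v > 0, the integral (1/2)∫_ℝ (1/√(2πv))·exp(-(x-m)²/(2v))·erfc(c·x) dx equals (1/2)·erfc(mc/√(1+2vc²)). -/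
open MeasureTheory Real

/-- The complementary error function `erfc t = (2/√π) ∫_t^∞ e^{-s²} ds`. -/
noncomputable def erfc (t : ℝ) : ℝ :=
  (2 / Real.sqrt Real.pi) * ∫ s in Set.Ioi t, Real.exp (-s ^ 2)

lemma integral_Ioi_comp_add (f : ℝ → ℝ) (a c : ℝ) :
    ∫ x in Set.Ioi a, f (x + c) = ∫ x in Set.Ioi (a + c), f x := by
  rw [← integral_indicator measurableSet_Ioi, ← integral_indicator measurableSet_Ioi,
    ← integral_add_right_eq_self (μ := volume) (Set.indicator (Set.Ioi (a + c)) f) c]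
  congr 1
  ext x
  by_cases h : x ∈ Set.Ioi a
  · rw [Set.indicator_of_mem h, Set.indicator_of_mem (by simp only [Set.mem_Ioi] at h ⊢; linarith)]
  · rw [Set.indicator_of_notMem h,
      Set.indicator_of_notMem (by simp only [Set.mem_Ioi] at h ⊢; linarith)]

lemma integrable_exp_sq : Integrable (fun x : ℝ => Real.exp (-x ^ 2)) := by
  simpa [neg_mul] using integrable_exp_neg_mul_sq (one_pos (α := ℝ))

lemma integrable_exp_shift (a : ℝ) : Integrable (fun u : ℝ => Real.exp (-(u + a) ^ 2)) := by
  simpa using integrable_exp_sq.comp_add_right a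

lemma integral_exp_shift (a : ℝ) : ∫ u : ℝ, Real.exp (-(u + a) ^ 2) = Real.sqrt π := by
  have h := integral_add_right_eq_self (μ := volume) (fun t : ℝ => Real.exp (-t ^ 2)) a
  rw [h]
  simpa using integral_gaussian 1

lemma base_int {b : ℝ} (hb : 0 < b) : Integrable (fun x : ℝ => Real.exp (-x ^ 2 / b)) := by
  have h1 : (fun x : ℝ => Real.exp (-x ^ 2 / b)) = fun x : ℝ => Real.exp (-(1 / b) * x ^ 2) := by
    funext x
    congr 1
    field_simp
  rw [h1]
  exact integrable_exp_neg_mul_sq (by positivity)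

lemma integrable_gauss_shift {b : ℝ} (hb : 0 < b) (a : ℝ) :
    Integrable (fun x : ℝ => Real.exp (-(x - a) ^ 2 / b)) := by
  have h := (base_int hb).comp_sub_right a
  simpa using h

set_option maxHeartbeats 1000000 in
lemma aux_integrable (m c v : ℝ) (hv : 0 < v) :
    Integrable (Function.uncurry fun x u : ℝ =>
        Real.exp (-(x - m) ^ 2 / (2 * v)) * Real.exp (-(u + c * x) ^ 2))
      (volume.prod (volume.restrict (Set.Ioi (0 : ℝ)))) := by
  have hπ := Real.pi_pos
  have hcont : Continuous (Function.uncurry fun x u : ℝ =>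
      Real.exp (-(x - m) ^ 2 / (2 * v)) * Real.exp (-(u + c * x) ^ 2)) := by fun_prop
  rw [integrable_prod_iff hcont.aestronglyMeasurable]
  refine ⟨Filter.Eventually.of_forall fun x => ?_, ?_⟩
  · simp only [Function.uncurry_apply_pair]
    exact ((integrable_exp_shift (c * x)).const_mul _).restrict
  have hbound : Integrable
      (fun x : ℝ => Real.sqrt π * Real.exp (-(x - m) ^ 2 / (2 * v))) :=
    (integrable_gauss_shift (by positivity) m).const_mul _
  refine hbound.mono (hcont.norm.aestronglyMeasurable.integral_prod_right') ?_
  refine Filter.Eventually.of_forall fun x => ?_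
  simp only [Function.uncurry_apply_pair]
  have hJ : ∫ u in Set.Ioi (0:ℝ), Real.exp (-(u + c * x) ^ 2) ≤ Real.sqrt π := by
    rw [← integral_exp_shift (c * x)]
    exact setIntegral_le_integral (integrable_exp_shift _)
      (Filter.Eventually.of_forall fun u => (Real.exp_pos _).le)
  have hJ0 : 0 ≤ ∫ u in Set.Ioi (0:ℝ), Real.exp (-(u + c * x) ^ 2) :=
    integral_nonneg fun u => (Real.exp_pos _).le
  have h2 : ∫ u in Set.Ioi (0:ℝ),
        ‖Real.exp (-(x - m) ^ 2 / (2 * v)) * Real.exp (-(u + c * x) ^ 2)‖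
      = Real.exp (-(x - m) ^ 2 / (2 * v))
        * ∫ u in Set.Ioi (0:ℝ), Real.exp (-(u + c * x) ^ 2) := by
    simp_rw [norm_mul, Real.norm_eq_abs, Real.abs_exp]
    exact integral_const_mul _ _
  rw [Real.norm_eq_abs, abs_of_nonneg (by rw [h2]; positivity), h2,
    Real.norm_eq_abs, abs_of_nonneg (by positivity)]
  have := (Real.exp_pos (-(x - m) ^ 2 / (2 * v))).le
  nlinarith

lemma aux_inner (m c v : ℝ) (hv : 0 < v) (u : ℝ) :
    ∫ x, Real.exp (-(x - m) ^ 2 / (2 * v)) * Real.exp (-(u + c * x) ^ 2)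
      = Real.sqrt (π / ((1 + 2 * v * c ^ 2) / (2 * v)))
        * Real.exp (-(u + m * c) ^ 2 / (1 + 2 * v * c ^ 2)) := by
  have hw : (0:ℝ) < 1 + 2 * v * c ^ 2 := by positivity
  have hexp : ∀ x, Real.exp (-(x - m) ^ 2 / (2 * v)) * Real.exp (-(u + c * x) ^ 2)
      = Real.exp (-(u + m * c) ^ 2 / (1 + 2 * v * c ^ 2))
        * Real.exp (-((1 + 2 * v * c ^ 2) / (2 * v))
          * (x - (m - 2 * v * c * u) / (1 + 2 * v * c ^ 2)) ^ 2) := by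
    intro x
    rw [← Real.exp_add, ← Real.exp_add]
    congr 1
    field_simp
    ring
  simp_rw [hexp]
  rw [integral_const_mul]
  have h := integral_sub_right_eq_self (μ := volume)
    (fun x : ℝ => Real.exp (-((1 + 2 * v * c ^ 2) / (2 * v)) * x ^ 2))
    ((m - 2 * v * c * u) / (1 + 2 * v * c ^ 2))
  rw [h, integral_gaussian]
  ring

set_option maxHeartbeats 1000000 in
theorem gaussian_integral_erfc (m c v : ℝ) (hv : 0 < v) :
    (1 / 2) * ∫ x, (1 / Real.sqrt (2 * Real.pi * v))
        * Real.exp (-(x - m) ^ 2 / (2 * v)) * erfc (c * x)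
      = (1 / 2) * erfc (m * c / Real.sqrt (1 + 2 * v * c ^ 2)) := by
  have hπ := Real.pi_pos
  have hw : (0:ℝ) < 1 + 2 * v * c ^ 2 := by positivity
  have hsw : 0 < Real.sqrt (1 + 2 * v * c ^ 2) := Real.sqrt_pos.mpr hw
  -- rewrite erfc via a translation
  have herfc : ∀ t : ℝ, erfc t
      = (2 / Real.sqrt π) * ∫ u in Set.Ioi (0 : ℝ), Real.exp (-(u + t) ^ 2) := by
    intro t
    rw [erfc]
    congr 1
    have h := integral_Ioi_comp_add (fun s => Real.exp (-s ^ 2)) 0 t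
    rw [zero_add] at h
    exact h.symm
  have hC : ∀ x, (1 / Real.sqrt (2 * π * v)) * Real.exp (-(x - m) ^ 2 / (2 * v)) * erfc (c * x)
      = (1 / Real.sqrt (2 * π * v)) * (2 / Real.sqrt π)
        * ∫ u in Set.Ioi (0:ℝ),
            Real.exp (-(x - m) ^ 2 / (2 * v)) * Real.exp (-(u + c * x) ^ 2) := by
    intro x
    rw [herfc (c * x), integral_const_mul]
    ring
  simp_rw [hC]
  rw [integral_const_mul, integral_integral_swap (aux_integrable m c v hv)]
  simp_rw [aux_inner m c v hv]
  rw [integral_const_mul]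
  -- evaluate the remaining u-integral
  have hu : ∫ u in Set.Ioi (0:ℝ), Real.exp (-(u + m * c) ^ 2 / (1 + 2 * v * c ^ 2))
      = Real.sqrt (1 + 2 * v * c ^ 2)
        * ∫ s in Set.Ioi (m * c / Real.sqrt (1 + 2 * v * c ^ 2)), Real.exp (-s ^ 2) := by
    have h1 := integral_Ioi_comp_add
      (fun t => Real.exp (-t ^ 2 / (1 + 2 * v * c ^ 2))) 0 (m * c)
    rw [zero_add] at h1
    rw [h1]
    have h2 : ∀ t : ℝ, Real.exp (-t ^ 2 / (1 + 2 * v * c ^ 2))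
        = Real.exp (-(t * (Real.sqrt (1 + 2 * v * c ^ 2))⁻¹) ^ 2) := by
      intro t
      congr 1
      rw [mul_pow, inv_pow, Real.sq_sqrt hw.le]
      field_simp
    simp_rw [h2]
    rw [integral_comp_mul_right_Ioi (fun s => Real.exp (-s ^ 2)) (m * c)
      (inv_pos.mpr hsw)]
    rw [inv_inv, smul_eq_mul, ← div_eq_mul_inv]
  rw [hu, erfc]
  -- final arithmetic
  set I : ℝ := ∫ s in Set.Ioi (m * c / Real.sqrt (1 + 2 * v * c ^ 2)), Real.exp (-s ^ 2) with hI
  have hkey : Real.sqrt (π / ((1 + 2 * v * c ^ 2) / (2 * v)))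
      * Real.sqrt (1 + 2 * v * c ^ 2) = Real.sqrt (2 * π * v) := by
    rw [← Real.sqrt_mul (by positivity)]
    congr 1
    field_simp
  have hs2 : 0 < Real.sqrt (2 * π * v) := Real.sqrt_pos.mpr (by positivity)
  have hsp : 0 < Real.sqrt π := Real.sqrt_pos.mpr hπ
  calc (1 / 2) * ((1 / Real.sqrt (2 * π * v)) * (2 / Real.sqrt π)
        * (Real.sqrt (π / ((1 + 2 * v * c ^ 2) / (2 * v)))
          * (Real.sqrt (1 + 2 * v * c ^ 2) * I)))
      = (1 / 2) * ((2 / Real.sqrt π) * I)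
        * ((Real.sqrt (π / ((1 + 2 * v * c ^ 2) / (2 * v)))
          * Real.sqrt (1 + 2 * v * c ^ 2)) / Real.sqrt (2 * π * v)) := by ring
    _ = (1 / 2) * ((2 / Real.sqrt π) * I) := by
        rw [hkey, div_self hs2.ne', mul_one]
end

section
/- For all real c, the integral (1/2)∫_0^∞ (√2/√π)·e^{-x²/2}·erfc(c·x) dx equals (1/π)·arctan(1/(√2·c)) when c > 0, and more generally equals (1/2) - (1/π)·arctan(√2·c) for all real c. -/
open MeasureTheory Real

open Set Filter

noncomputable def E (t : ℝ) : ℝ := ∫ s in Set.Ioi t, Real.exp (-s ^ 2)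

lemma intE : Integrable (fun s : ℝ => Real.exp (-s ^ 2)) := by
  have := integrable_exp_neg_mul_sq (b := 1) one_pos
  simpa using this

lemma E_split (a t : ℝ) (h : a ≤ t) :
    E a = (∫ s in a..t, Real.exp (-s ^ 2)) + E t := by
  rw [intervalIntegral.integral_of_le h, E, E,
    ← setIntegral_union (Set.Ioc_disjoint_Ioi le_rfl) measurableSet_Ioi
      (intE.integrableOn) (intE.integrableOn), Set.Ioc_union_Ioi_eq_Ioi h]

lemma hasDerivAt_E (t : ℝ) : HasDerivAt E (-Real.exp (-t ^ 2)) t := by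
  have hcont : Continuous fun s : ℝ => Real.exp (-s ^ 2) := by continuity
  have hd : HasDerivAt (fun u => ∫ s in (t - 1)..u, Real.exp (-s ^ 2))
      (Real.exp (-t ^ 2)) t := by
    exact intervalIntegral.integral_hasDerivAt_right
      intE.intervalIntegrable
      hcont.aestronglyMeasurable.stronglyMeasurableAtFilter
      hcont.continuousAt
  have hd2 : HasDerivAt (fun u => E (t - 1) - ∫ s in (t - 1)..u, Real.exp (-s ^ 2))
      (-Real.exp (-t ^ 2)) t := (hd.const_sub _)
  apply hd2.congr_of_eventuallyEq
  filter_upwards [eventually_gt_nhds (show t - 1 < t by linarith)] with u hu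
  have := E_split (t - 1) u (by linarith)
  linarith

lemma E_nonneg (t : ℝ) : 0 ≤ E t :=
  setIntegral_nonneg measurableSet_Ioi fun s _ => (Real.exp_pos _).le

lemma E_le (t : ℝ) : E t ≤ Real.sqrt Real.pi := by
  have h := setIntegral_le_integral (s := Set.Ioi t) intE
    (Filter.Eventually.of_forall fun s => (Real.exp_pos _).le)
  have h2 : (∫ s : ℝ, Real.exp (-s ^ 2)) = Real.sqrt Real.pi := by
    have := integral_gaussian 1
    simpa using this
  rw [E]; linarith [h, h2.le]

lemma E_zero : E 0 = Real.sqrt Real.pi / 2 := by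
  have := integral_gaussian_Ioi 1
  simpa [E] using this

lemma erfc_eq (t : ℝ) : erfc t = (2 / Real.sqrt Real.pi) * E t := rfl

lemma sqrt_pi_pos : 0 < Real.sqrt Real.pi := Real.sqrt_pos.mpr Real.pi_pos

lemma erfc_zero : erfc 0 = 1 := by
  rw [erfc_eq, E_zero]; field_simp

lemma erfc_nonneg (t : ℝ) : 0 ≤ erfc t := by
  rw [erfc_eq]
  have := E_nonneg t
  positivity

lemma erfc_le_two (t : ℝ) : erfc t ≤ 2 := by
  rw [erfc_eq]
  have := E_le t
  rw [div_mul_eq_mul_div, mul_comm]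
  rw [div_le_iff₀ sqrt_pi_pos]
  nlinarith [sqrt_pi_pos]

lemma hasDerivAt_erfc (t : ℝ) :
    HasDerivAt erfc (-(2 / Real.sqrt Real.pi) * Real.exp (-t ^ 2)) t := by
  have := (hasDerivAt_E t).const_mul (2 / Real.sqrt Real.pi)
  have h : 2 / Real.sqrt Real.pi * -Real.exp (-t ^ 2)
      = -(2 / Real.sqrt Real.pi) * Real.exp (-t ^ 2) := by ring
  rw [h] at this
  exact this

lemma continuous_erfc : Continuous erfc :=
  continuous_iff_continuousAt.2 fun t => (hasDerivAt_erfc t).continuousAt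

/-- ∫_{Ioi 0} x e^{-a x²} dx = 1/(2a) for a > 0 -/
lemma integral_x_exp (a : ℝ) (ha : 0 < a) :
    ∫ x in Set.Ioi (0 : ℝ), x * Real.exp (-a * x ^ 2) = 1 / (2 * a) := by
  have hderiv : ∀ x ∈ Set.Ici (0 : ℝ),
      HasDerivAt (fun x : ℝ => -(1 / (2 * a)) * Real.exp (-a * x ^ 2))
        (x * Real.exp (-a * x ^ 2)) x := by
    intro x _
    have h1 : HasDerivAt (fun x : ℝ => -a * x ^ 2) (-a * (2 * x)) x := by
      simpa using ((hasDerivAt_pow 2 x).const_mul (-a))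
    have : HasDerivAt (fun x : ℝ => -(1 / (2 * a)) * Real.exp (-a * x ^ 2))
        (-(1 / (2 * a)) * (Real.exp (-a * x ^ 2) * (-a * (2 * x)))) x :=
      (h1.exp).const_mul (-(1 / (2 * a)))
    convert this using 1
    field_simp
  have hint : IntegrableOn (fun x : ℝ => x * Real.exp (-a * x ^ 2)) (Set.Ioi 0) :=
    (integrable_mul_exp_neg_mul_sq ha).integrableOn
  have htend : Tendsto (fun x : ℝ => -(1 / (2 * a)) * Real.exp (-a * x ^ 2)) atTop (nhds 0) := by
    have : Tendsto (fun x : ℝ => -a * x ^ 2) atTop atBot := by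
      apply Tendsto.const_mul_atTop_of_neg (neg_neg_iff_pos.2 ha)
      exact tendsto_pow_atTop (by norm_num)
    have := (Real.tendsto_exp_atBot.comp this).const_mul (-(1 / (2 * a)))
    simpa using this
  have := integral_Ioi_of_hasDerivAt_of_tendsto' hderiv hint htend
  rw [this]
  field_simp
  simp

noncomputable def Ifun (c : ℝ) : ℝ :=
  ∫ x in Set.Ioi (0 : ℝ),
    (Real.sqrt 2 / Real.sqrt Real.pi) * Real.exp (-x ^ 2 / 2) * erfc (c * x)

lemma hasDerivAt_Ifun (c : ℝ) :
    HasDerivAt Ifun (-(2 * Real.sqrt 2 / Real.pi) * (1 / (1 + 2 * c ^ 2))) c := by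
  set F : ℝ → ℝ → ℝ := fun b x =>
    (Real.sqrt 2 / Real.sqrt Real.pi) * Real.exp (-x ^ 2 / 2) * erfc (b * x) with hF
  set F' : ℝ → ℝ → ℝ := fun b x =>
    (Real.sqrt 2 / Real.sqrt Real.pi) * Real.exp (-x ^ 2 / 2) *
      (-(2 / Real.sqrt Real.pi) * Real.exp (-(b * x) ^ 2) * x) with hF'
  set bound : ℝ → ℝ := fun x =>
    (Real.sqrt 2 / Real.sqrt Real.pi) * (2 / Real.sqrt Real.pi) *
      (x * Real.exp (-(1/2 : ℝ) * x ^ 2)) with hbound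
  have hcontF : ∀ b, Continuous (F b) := by
    intro b
    exact ((continuous_const.mul ((continuous_pow 2).neg.div_const 2).rexp).mul
      (continuous_erfc.comp (continuous_const.mul continuous_id)))
  have hcontF' : Continuous (F' c) := by
    apply (continuous_const.mul ((continuous_pow 2).neg.div_const 2).rexp).mul
    apply (continuous_const.mul _).mul continuous_id
    exact (((continuous_const.mul continuous_id).pow 2).neg).rexp
  have hint0 : Integrable (fun x : ℝ => Real.exp (-(1/2 : ℝ) * x ^ 2)) :=
    integrable_exp_neg_mul_sq (by norm_num)
  have key := hasDerivAt_integral_of_dominated_loc_of_deriv_le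
    (μ := volume.restrict (Set.Ioi (0:ℝ))) (x₀ := c) (F := F) (F' := F')
    (bound := bound) (Metric.ball_mem_nhds c one_pos)
    (Filter.Eventually.of_forall fun b => (hcontF b).aestronglyMeasurable)
    ?_ hcontF'.aestronglyMeasurable ?_ ?_ ?_
  · have heq : (∫ x in Set.Ioi (0:ℝ), F' c x)
        = -(2 * Real.sqrt 2 / Real.pi) * (1 / (1 + 2 * c ^ 2)) := by
      have h1 : ∀ x : ℝ, F' c x =
          (-(Real.sqrt 2 / Real.sqrt Real.pi) * (2 / Real.sqrt Real.pi)) *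
            (x * Real.exp (-(1/2 + c ^ 2) * x ^ 2)) := by
        intro x
        have hexp : Real.exp (-x ^ 2 / 2) * Real.exp (-(c * x) ^ 2)
            = Real.exp (-(1/2 + c ^ 2) * x ^ 2) := by
          rw [← Real.exp_add]; ring_nf
        simp only [hF']
        rw [← hexp]; ring
      rw [funext h1, MeasureTheory.integral_const_mul, integral_x_exp _ (by positivity)]
      have hpi : Real.sqrt Real.pi * Real.sqrt Real.pi = Real.pi :=
        Real.mul_self_sqrt Real.pi_pos.le
      field_simp
      ring_nf
      rw [Real.sq_sqrt Real.pi_pos.le]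
    rw [← heq]; exact key.2
  · -- integrability of F c
    apply Integrable.mono' (g := fun x => 2 * ((Real.sqrt 2 / Real.sqrt Real.pi) *
        Real.exp (-(1/2 : ℝ) * x ^ 2)))
    · exact ((hint0.const_mul _).const_mul 2).restrict
    · exact (hcontF c).aestronglyMeasurable
    · filter_upwards with x
      have h1 : 0 ≤ (Real.sqrt 2 / Real.sqrt Real.pi) * Real.exp (-x ^ 2 / 2) := by positivity
      have h2 : erfc (c * x) ≤ 2 := erfc_le_two _
      have h3 : 0 ≤ erfc (c * x) := erfc_nonneg _
      rw [hF, Real.norm_eq_abs]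
      beta_reduce
      rw [abs_of_nonneg (by positivity)]
      have hxx : -x ^ 2 / 2 = -(1/2 : ℝ) * x ^ 2 := by ring
      rw [hxx] at h1 ⊢
      nlinarith
  · -- bound
    filter_upwards [ae_restrict_mem measurableSet_Ioi] with x hx b _
    have hx0 : (0:ℝ) < x := hx
    rw [hF', hbound, Real.norm_eq_abs]
    beta_reduce
    have he : Real.exp (-(b * x) ^ 2) ≤ 1 := Real.exp_le_one_iff.2 (neg_nonpos.mpr (sq_nonneg _))
    have hA : (0:ℝ) ≤ (Real.sqrt 2 / Real.sqrt Real.pi) * (2 / Real.sqrt Real.pi) *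
        (x * Real.exp (-x ^ 2 / 2)) :=
      mul_nonneg (by positivity) (mul_nonneg hx0.le (Real.exp_pos _).le)
    have hkey : (Real.sqrt 2 / Real.sqrt Real.pi) * Real.exp (-x ^ 2 / 2) *
        (-(2 / Real.sqrt Real.pi) * Real.exp (-(b * x) ^ 2) * x)
        = -(((Real.sqrt 2 / Real.sqrt Real.pi) * (2 / Real.sqrt Real.pi) *
          (x * Real.exp (-x ^ 2 / 2))) * Real.exp (-(b * x) ^ 2)) := by ring
    rw [hkey, abs_neg, abs_of_nonneg (mul_nonneg hA (Real.exp_pos _).le)]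
    have hxx : -(1/2 : ℝ) * x ^ 2 = -x ^ 2 / 2 := by ring
    rw [hxx]
    exact mul_le_of_le_one_right hA he
  · -- bound integrable
    exact (((integrable_mul_exp_neg_mul_sq (by norm_num : (0:ℝ) < 1/2)).const_mul
      _).restrict)
  · -- differentiability
    filter_upwards with x b _
    have h1 : HasDerivAt (fun b : ℝ => b * x) x b := hasDerivAt_mul_const x
    have h2 : HasDerivAt (fun b : ℝ => erfc (b * x))
        (-(2 / Real.sqrt Real.pi) * Real.exp (-(b * x) ^ 2) * x) b := by
      have := (hasDerivAt_erfc (b * x)).comp b h1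
      simpa [Function.comp_def] using this
    exact h2.const_mul _

lemma Ifun_zero : Ifun 0 = 1 := by
  have h : ∀ x : ℝ, (Real.sqrt 2 / Real.sqrt Real.pi) * Real.exp (-x ^ 2 / 2) * erfc (0 * x)
      = (Real.sqrt 2 / Real.sqrt Real.pi) * Real.exp (-(1/2 : ℝ) * x ^ 2) := by
    intro x
    rw [zero_mul, erfc_zero]
    ring_nf
  rw [Ifun, funext h, MeasureTheory.integral_const_mul]
  have := integral_gaussian_Ioi (1/2 : ℝ)
  rw [this]
  have h2 : Real.sqrt (Real.pi / (1/2)) = Real.sqrt 2 * Real.sqrt Real.pi := by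
    rw [← Real.sqrt_mul (by norm_num) Real.pi]
    ring_nf
  rw [h2]
  have := sqrt_pi_pos
  have h3 : Real.sqrt 2 * Real.sqrt 2 = 2 := Real.mul_self_sqrt (by norm_num)
  field_simp
  nlinarith

lemma Ifun_eq (c : ℝ) : Ifun c = 1 - (2 / Real.pi) * Real.arctan (Real.sqrt 2 * c) := by
  set G : ℝ → ℝ := fun c => Ifun c - (1 - (2 / Real.pi) * Real.arctan (Real.sqrt 2 * c))
    with hG
  have hd : ∀ b : ℝ, HasDerivAt G 0 b := by
    intro b
    have h1 : HasDerivAt (fun c : ℝ => Real.arctan (Real.sqrt 2 * c))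
        (1 / (1 + (Real.sqrt 2 * b) ^ 2) * Real.sqrt 2) b := by
      have := (Real.hasDerivAt_arctan (Real.sqrt 2 * b)).comp b
        ((hasDerivAt_id b).const_mul (Real.sqrt 2))
      simpa [Function.comp_def] using this
    have h2 := (h1.const_mul (2 / Real.pi)).const_sub 1
    have h3 := (hasDerivAt_Ifun b).sub h2
    have h5 : (Real.sqrt 2 * b) ^ 2 = 2 * b ^ 2 := by
      rw [mul_pow, Real.sq_sqrt (by norm_num : (0:ℝ) ≤ 2)]
    have h4 : -(2 * Real.sqrt 2 / Real.pi) * (1 / (1 + 2 * b ^ 2)) -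
        -(2 / Real.pi * (1 / (1 + (Real.sqrt 2 * b) ^ 2) * Real.sqrt 2)) = 0 := by
      rw [h5]; ring
    rw [h4] at h3
    exact h3
  have hconst : G c = G 0 :=
    is_const_of_deriv_eq_zero (fun x => (hd x).differentiableAt)
      (fun x => (hd x).deriv) c 0
  have hG0 : G 0 = 0 := by
    simp [hG, Ifun_zero]
  have := hconst.trans hG0
  rw [hG] at this
  simpa using sub_eq_zero.mp this

theorem half_gaussian_integral_erfc (c : ℝ) :
    ((1 / 2) * ∫ x in Set.Ioi (0 : ℝ),
        (Real.sqrt 2 / Real.sqrt Real.pi) * Real.exp (-x ^ 2 / 2) * erfc (c * x)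
      = (1 / 2) - (1 / Real.pi) * Real.arctan (Real.sqrt 2 * c))
    ∧ (0 < c →
      (1 / 2) * ∫ x in Set.Ioi (0 : ℝ),
          (Real.sqrt 2 / Real.sqrt Real.pi) * Real.exp (-x ^ 2 / 2) * erfc (c * x)
        = (1 / Real.pi) * Real.arctan (1 / (Real.sqrt 2 * c))) := by
  have h1 : (1 / 2 : ℝ) * ∫ x in Set.Ioi (0 : ℝ),
      (Real.sqrt 2 / Real.sqrt Real.pi) * Real.exp (-x ^ 2 / 2) * erfc (c * x)
      = (1 / 2) - (1 / Real.pi) * Real.arctan (Real.sqrt 2 * c) := by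
    have := Ifun_eq c
    rw [Ifun] at this
    rw [this]
    ring
  refine ⟨h1, fun hc => ?_⟩
  rw [h1]
  have hpos : 0 < Real.sqrt 2 * c := mul_pos (Real.sqrt_pos.2 (by norm_num)) hc
  have h2 := Real.arctan_inv_of_pos hpos
  rw [one_div (Real.sqrt 2 * c), h2]
  have := Real.pi_ne_zero
  field_simp
end
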